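/- Let G be a finite group; let C_x and C_y be the centralizers in Ḡ of x and y, and write a^b = b⁻¹ab. Then: (i) if two automorphisms φ̃₁, φ̃₂ of Ḡ satisfy φ̃_j(y) = y and φ̃_j(x) = x^{f_j} for elements f_j ∈ Ḡ (j = 1,2), and φ̃₁ and φ̃₂ induce the same element of Out(Ḡ), then f₁ and f₂ lie in the same double coset, i.e., C_x f₁ C_y = C_x f₂ C_y; (ii) if an automorphism φ̃ of Ḡ with φ̃(x) = x^f and φ̃(y) = y represents an element of Out(Ḡ) commuting with the class of θ, then 1 ∈ C_x · f θ(f) · (C_y)^{θ(f)}, where (C_y)^{θ(f)} = θ(f)⁻¹ C_y θ(f); (iii) conversely, if φ̃ ∈ Aut(Ḡ) satisfies φ̃(x) = x^f, φ̃(y) = y and 1 ∈ C_x · f θ(f) · (C_y)^{θ(f)}, then the class of φ̃ in Out(Ḡ) commutes with the class of θ. -/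

import Mathlib

/-- The free group on two generators. -/
abbrev F2 : Type := FreeGroup Bool

/-- The generator `x` of `F₂`. -/
def fx : F2 := FreeGroup.of true

/-- The generator `y` of `F₂`. -/
def fy : F2 := FreeGroup.of false

/-- A subgroup `N` of `Γ` *has index `G`* if it is normal with quotient isomorphic to `G`,
equivalently it is the kernel of a surjective homomorphism onto `G`. -/
def HasIndex (G : Type) [Group G] {Γ : Type} [Group Γ] (N : Subgroup Γ) : Prop :=
  ∃ f : Γ →* G, Function.Surjective f ∧ f.ker = N

/-- `N_G`: the intersection of all subgroups of `F₂` of index `G`. -/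
def NG (G : Type) [Group G] : Subgroup F2 := sInf {N | HasIndex G N}

instance NG_normal (G : Type) [Group G] : (NG G).Normal := by
  constructor
  intro n hn g
  rw [NG, Subgroup.mem_sInf] at hn ⊢
  rintro N ⟨f, hf, rfl⟩
  have h1 : f n = 1 := hn f.ker ⟨f, hf, rfl⟩
  simp [MonoidHom.mem_ker, h1]

/-- The group `Ḡ = F₂ / N_G`. -/
abbrev Gbar (G : Type) [Group G] : Type := F2 ⧸ NG G

/-- The canonical generator `x` of `Ḡ`. -/
def xbar (G : Type) [Group G] : Gbar G := QuotientGroup.mk fx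

/-- The canonical generator `y` of `Ḡ`. -/
def ybar (G : Type) [Group G] : Gbar G := QuotientGroup.mk fy

/-- The subgroup of inner automorphisms of `G`. -/
def Inn (G : Type) [Group G] : Subgroup (MulAut G) := (MulAut.conj : G →* MulAut G).range

instance Inn_normal (G : Type) [Group G] : (Inn G).Normal := by
  constructor
  rintro n ⟨g, rfl⟩ φ
  refine ⟨φ g, ?_⟩
  ext h
  simp [MulAut.conj_apply, MulAut.inv_def, map_mul, map_inv]

/-- The outer automorphism group of `G`. -/
abbrev OutG (G : Type) [Group G] : Type := MulAut G ⧸ Inn G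

/-- The canonical projection `Aut(G) → Out(G)`. -/
def OutMk {G : Type} [Group G] : MulAut G →* OutG G := QuotientGroup.mk' (Inn G)

/-- The double coset `A f B` in a group. -/
def dCoset {Γ : Type} [Group Γ] (A B : Subgroup Γ) (f : Γ) : Set Γ :=
  {g | ∃ a ∈ A, ∃ b ∈ B, g = a * f * b}

/-! Two automorphisms have the same outer class iff they differ by an inner automorphism `c_g`,
and since `Ḡ` is generated by `x` and `y` this can be tested on `x` and `y`. For automorphisms
fixing `y` and conjugating `x` by `f₁`, `f₂`, agreement on `y` forces `g ∈ C_y` and agreement on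
`x` forces `f₂ g f₁⁻¹ ∈ C_x`, so `f₂ ∈ C_x f₁ C_y`. For the commutator question compare
`φθ : (x, y) ↦ (y, x^f)` with `θφ : (x, y) ↦ (y^{θ f}, x)`: a conjugator `g` with `θφ = c_g ∘ φθ`
is exactly an element with `θ(f) g ∈ C_y` and `g f⁻¹ ∈ C_x`, and these correspond to
`a = g f⁻¹`, `b = (θ(f) g)⁻¹` with `1 = a f b θ(f)`. -/

section

variable {Γ : Type} [Group Γ] {x y : Γ}

lemma mulAut_conj_mul_eq_mul_conj (φ : MulAut Γ) (c : Γ) :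
    φ * MulAut.conj c = MulAut.conj (φ c) * φ := by
  ext z; simp [mul_assoc]

lemma outMk_eq_iff_exists_conj {φ ψ : MulAut Γ} :
    OutMk φ = OutMk ψ ↔ ∃ g : Γ, ψ = MulAut.conj g * φ := by
  rw [OutMk, QuotientGroup.mk'_eq_mk']
  constructor
  · rintro ⟨_, ⟨c, rfl⟩, rfl⟩
    exact ⟨φ c, mulAut_conj_mul_eq_mul_conj φ c⟩
  · rintro ⟨g, rfl⟩
    refine ⟨MulAut.conj (φ.symm g), ⟨_, rfl⟩, ?_⟩
    rw [mulAut_conj_mul_eq_mul_conj, MulEquiv.apply_symm_apply]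

lemma outMk_eq_iff_of_closure_eq_top (hgen : Subgroup.closure {x, y} = ⊤) {φ ψ : MulAut Γ} :
    OutMk φ = OutMk ψ ↔ ∃ g : Γ, ψ x = g * φ x * g⁻¹ ∧ ψ y = g * φ y * g⁻¹ := by
  rw [outMk_eq_iff_exists_conj]
  refine exists_congr fun g => ⟨fun h => by simp [h, MulAut.conj_apply], fun h => ?_⟩
  refine MulEquiv.toMonoidHom_injective (MonoidHom.eq_of_eqOn_dense hgen ?_)
  rintro z (rfl | rfl) <;> simp [h, MulAut.conj_apply]

lemma conj_eq_self_iff_mem_centralizer {g z : Γ} :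
    g * z * g⁻¹ = z ↔ g ∈ Subgroup.centralizer {z} := by
  rw [Subgroup.mem_centralizer_singleton_iff, mul_inv_eq_iff_eq_mul]

lemma conj_eq_conj_iff_mem_centralizer {u v z : Γ} :
    u⁻¹ * z * u = v * z * v⁻¹ ↔ u * v ∈ Subgroup.centralizer {z} := by
  rw [← conj_eq_self_iff_mem_centralizer, ← (MulAut.conj u).injective.eq_iff, eq_comm]
  simp [MulAut.conj_apply, mul_assoc]

lemma dCoset_eq_doubleCoset (A B : Subgroup Γ) (f : Γ) :
    dCoset A B f = DoubleCoset.doubleCoset f A B :=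
  Set.ext fun _ => DoubleCoset.mem_doubleCoset.symm

lemma exists_mul_mem_and_mul_inv_mem_iff {A B : Subgroup Γ} {f t : Γ} :
    (∃ g : Γ, t * g ∈ B ∧ g * f⁻¹ ∈ A) ↔ ∃ a ∈ A, ∃ b ∈ B, 1 = a * (f * t) * (t⁻¹ * b * t) := by
  constructor
  · rintro ⟨g, hgB, hgA⟩
    exact ⟨g * f⁻¹, hgA, (t * g)⁻¹, inv_mem hgB, by group⟩
  · rintro ⟨a, ha, b, hb, h⟩
    have ht : t = (a * f * b)⁻¹ := eq_inv_of_mul_eq_one_right (by simpa [mul_assoc] using h.symm)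
    refine ⟨a * f, ?_, by rwa [mul_inv_cancel_right]⟩
    rw [ht]
    convert inv_mem hb using 1
    group

lemma dCoset_centralizer_eq_of_outMk_eq {φ₁ φ₂ : MulAut Γ} {f₁ f₂ : Γ}
    (h₁y : φ₁ y = y) (h₁x : φ₁ x = f₁⁻¹ * x * f₁) (h₂y : φ₂ y = y) (h₂x : φ₂ x = f₂⁻¹ * x * f₂)
    (h : OutMk φ₁ = OutMk φ₂) :
    dCoset (Subgroup.centralizer {x}) (Subgroup.centralizer {y}) f₁ =
      dCoset (Subgroup.centralizer {x}) (Subgroup.centralizer {y}) f₂ := by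
  obtain ⟨g, rfl⟩ := outMk_eq_iff_exists_conj.1 h
  simp only [MulAut.mul_apply, MulAut.conj_apply, h₁x, h₁y] at h₂x h₂y
  have hgy : g ∈ Subgroup.centralizer {y} := conj_eq_self_iff_mem_centralizer.1 h₂y
  have hgx : f₂ * (g * f₁⁻¹) ∈ Subgroup.centralizer {x} :=
    conj_eq_conj_iff_mem_centralizer.1 (by simpa [mul_assoc] using h₂x.symm)
  rw [dCoset_eq_doubleCoset, dCoset_eq_doubleCoset]
  refine (DoubleCoset.doubleCoset_eq_of_mem (DoubleCoset.mem_doubleCoset.2 ?_)).symm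
  exact ⟨_, hgx, g⁻¹, inv_mem hgy, by group⟩

lemma commute_outMk_iff_one_mem_mul_conj (hgen : Subgroup.closure {x, y} = ⊤)
    {θ φ : MulAut Γ} {f : Γ} (hθx : θ x = y) (hθy : θ y = x)
    (hx : φ x = f⁻¹ * x * f) (hy : φ y = y) :
    Commute (OutMk φ) (OutMk θ) ↔
      ∃ a ∈ Subgroup.centralizer {x}, ∃ b ∈ Subgroup.centralizer {y},
        1 = a * (f * θ f) * ((θ f)⁻¹ * b * θ f) := by
  rw [Commute, SemiconjBy, ← map_mul, ← map_mul, outMk_eq_iff_of_closure_eq_top hgen,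
    ← exists_mul_mem_and_mul_inv_mem_iff]
  simp only [MulAut.mul_apply, hθx, hθy, hx, hy, map_mul, map_inv]
  refine exists_congr fun g => and_congr ?_ ?_
  · exact conj_eq_conj_iff_mem_centralizer
  · rw [← conj_eq_self_iff_mem_centralizer, eq_comm]
    simp [mul_assoc]

end

lemma closure_xbar_ybar (G : Type) [Group G] :
    Subgroup.closure {xbar G, ybar G} = ⊤ := by
  have h : ({xbar G, ybar G} : Set (Gbar G)) =
      QuotientGroup.mk' (NG G) '' Set.range FreeGroup.of := by
    ext g
    simp [xbar, ybar, fx, fy, eq_comm, or_comm]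
  rw [h, ← MonoidHom.map_closure, FreeGroup.closure_range_of, ← MonoidHom.range_eq_map,
    MonoidHom.range_eq_top]
  exact QuotientGroup.mk'_surjective _

theorem stmt18_general (G : Type) [Group G]
    (θ : MulAut (Gbar G))
    (hθx : θ (xbar G) = ybar G) (hθy : θ (ybar G) = xbar G) :
    -- (i)
    (∀ (φ₁ φ₂ : MulAut (Gbar G)) (f₁ f₂ : Gbar G),
      φ₁ (ybar G) = ybar G → φ₁ (xbar G) = f₁⁻¹ * xbar G * f₁ →
      φ₂ (ybar G) = ybar G → φ₂ (xbar G) = f₂⁻¹ * xbar G * f₂ →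
      OutMk φ₁ = OutMk φ₂ →
      dCoset (Subgroup.centralizer {xbar G}) (Subgroup.centralizer {ybar G}) f₁ =
        dCoset (Subgroup.centralizer {xbar G}) (Subgroup.centralizer {ybar G}) f₂) ∧
    -- (ii)
    (∀ (φ : MulAut (Gbar G)) (f : Gbar G),
      φ (xbar G) = f⁻¹ * xbar G * f → φ (ybar G) = ybar G →
      Commute (OutMk φ) (OutMk θ) →
      ∃ a ∈ Subgroup.centralizer {xbar G}, ∃ b ∈ Subgroup.centralizer {ybar G},
        (1 : Gbar G) = a * (f * θ f) * ((θ f)⁻¹ * b * θ f)) ∧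
    -- (iii)
    (∀ (φ : MulAut (Gbar G)) (f : Gbar G),
      φ (xbar G) = f⁻¹ * xbar G * f → φ (ybar G) = ybar G →
      (∃ a ∈ Subgroup.centralizer {xbar G}, ∃ b ∈ Subgroup.centralizer {ybar G},
        (1 : Gbar G) = a * (f * θ f) * ((θ f)⁻¹ * b * θ f)) →
      Commute (OutMk φ) (OutMk θ)) := by
  have hgen := closure_xbar_ybar G
  exact ⟨fun _ _ _ _ => dCoset_centralizer_eq_of_outMk_eq,
    fun _ _ hx hy => (commute_outMk_iff_one_mem_mul_conj hgen hθx hθy hx hy).1,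
    fun _ _ hx hy => (commute_outMk_iff_one_mem_mul_conj hgen hθx hθy hx hy).2⟩

/-- (i) an element of `𝒢𝒯₁(G)` determines a unique double coset `C_x f C_y`;
(ii) if `φ̃ : x ↦ x^f, y ↦ y` commutes with `θ` in `Out(Ḡ)` then
`1 ∈ C_x · fθ(f) · (C_y)^{θ(f)}`; (iii) conversely. -/
theorem stmt18 (G : Type) [Group G] [Finite G]
    (θ : MulAut (Gbar G))
    (hθx : θ (xbar G) = ybar G) (hθy : θ (ybar G) = xbar G) :
    -- (i)
    (∀ (φ₁ φ₂ : MulAut (Gbar G)) (f₁ f₂ : Gbar G),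
      φ₁ (ybar G) = ybar G → φ₁ (xbar G) = f₁⁻¹ * xbar G * f₁ →
      φ₂ (ybar G) = ybar G → φ₂ (xbar G) = f₂⁻¹ * xbar G * f₂ →
      OutMk φ₁ = OutMk φ₂ →
      dCoset (Subgroup.centralizer {xbar G}) (Subgroup.centralizer {ybar G}) f₁ =
        dCoset (Subgroup.centralizer {xbar G}) (Subgroup.centralizer {ybar G}) f₂) ∧
    -- (ii)
    (∀ (φ : MulAut (Gbar G)) (f : Gbar G),
      φ (xbar G) = f⁻¹ * xbar G * f → φ (ybar G) = ybar G →
      Commute (OutMk φ) (OutMk θ) →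
      ∃ a ∈ Subgroup.centralizer {xbar G}, ∃ b ∈ Subgroup.centralizer {ybar G},
        (1 : Gbar G) = a * (f * θ f) * ((θ f)⁻¹ * b * θ f)) ∧
    -- (iii)
    (∀ (φ : MulAut (Gbar G)) (f : Gbar G),
      φ (xbar G) = f⁻¹ * xbar G * f → φ (ybar G) = ybar G →
      (∃ a ∈ Subgroup.centralizer {xbar G}, ∃ b ∈ Subgroup.centralizer {ybar G},
        (1 : Gbar G) = a * (f * θ f) * ((θ f)⁻¹ * b * θ f)) →
      Commute (OutMk φ) (OutMk θ)) :=
  stmt18_general G θ hθx hθy
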